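/- Suppose there exists γ* ∈ Γ₁ with A[γ*] ≻ 0, and suppose for every (x,t) ∈ S_SDP \ S the subspace R'(x,t) is nontrivial (contains a nonzero vector). Then conv(S) = S_SDP. -/

import Mathlib

noncomputable section
open Matrix Set

/-- Dot-product style inner product on `ℝ × (Fin m → ℝ)` (i.e. `ℝ^{1+m}`). -/
def ipr {m : ℕ} (v w : ℝ × (Fin m → ℝ)) : ℝ := v.1 * w.1 + v.2 ⬝ᵥ w.2

/-- `A(γ₀, γ) = γ₀ A₀ + ∑ i, γ i • A i`. -/
def Amix {ι : Type*} [Fintype ι] {m : ℕ} (A0 : Matrix ι ι ℝ)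
    (A : Fin m → Matrix ι ι ℝ) (g0 : ℝ) (g : Fin m → ℝ) : Matrix ι ι ℝ :=
  g0 • A0 + ∑ i, g i • A i

/-- `b(γ) = b₀ + ∑ i, γ i • b i` (the `γ₀ = 1` slice). -/
def bmix {ι : Type*} {m : ℕ} (b0 : ι → ℝ) (b : Fin m → ι → ℝ) (g : Fin m → ℝ) : ι → ℝ :=
  b0 + ∑ i, g i • b i

/-- The cone of convex Lagrange multipliers `Γ`. -/
def Gamma {ι : Type*} [Fintype ι] {m : ℕ} (A0 : Matrix ι ι ℝ)
    (A : Fin m → Matrix ι ι ℝ) : Set (ℝ × (Fin m → ℝ)) :=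
  {p | 0 ≤ p.1 ∧ (∀ i, 0 ≤ p.2 i) ∧ (Amix A0 A p.1 p.2).PosSemidef}

/-- The slice `Γ₁` of `Γ` at `γ₀ = 1`. -/
def Gamma1 {ι : Type*} [Fintype ι] {m : ℕ} (A0 : Matrix ι ι ℝ)
    (A : Fin m → Matrix ι ι ℝ) : Set (Fin m → ℝ) :=
  {g | (∀ i, 0 ≤ g i) ∧ (Amix A0 A 1 g).PosSemidef}

/-- Polar cone with respect to `ipr`. -/
def polarCone {m : ℕ} (S : Set (ℝ × (Fin m → ℝ))) : Set (ℝ × (Fin m → ℝ)) :=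
  {v | ∀ w ∈ S, ipr v w ≤ 0}

/-- The quadratic function `x ↦ xᵀ M x + 2 bᵀ x + c`. -/
def quadF {ι : Type*} [Fintype ι] (M : Matrix ι ι ℝ) (b : ι → ℝ) (c : ℝ) (x : ι → ℝ) : ℝ :=
  x ⬝ᵥ M.mulVec x + 2 * (b ⬝ᵥ x) + c

/-- The vector `q(x) = (q₀(x), q₁(x), …, q_m(x)) ∈ ℝ^{1+m}`. -/
def qVec {ι : Type*} [Fintype ι] {m : ℕ} (A0 : Matrix ι ι ℝ) (b0 : ι → ℝ) (c0 : ℝ)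
    (A : Fin m → Matrix ι ι ℝ) (b : Fin m → ι → ℝ) (c : Fin m → ℝ)
    (x : ι → ℝ) : ℝ × (Fin m → ℝ) :=
  (quadF A0 b0 c0 x, fun i => quadF (A i) (b i) (c i) x)

/-- The first unit vector `e₀ ∈ ℝ^{1+m}`. -/
def e0 {m : ℕ} : ℝ × (Fin m → ℝ) := (1, 0)

/-- `[γ, q(x)] = q₀(x) + ∑ i, γ i * q i (x)`. -/
def brkt {ι : Type*} [Fintype ι] {m : ℕ} (A0 : Matrix ι ι ℝ) (b0 : ι → ℝ) (c0 : ℝ)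
    (A : Fin m → Matrix ι ι ℝ) (b : Fin m → ι → ℝ) (c : Fin m → ℝ)
    (g : Fin m → ℝ) (x : ι → ℝ) : ℝ :=
  quadF A0 b0 c0 x + ∑ i, g i * quadF (A i) (b i) (c i) x

/-- The projected SDP relaxation `S_SDP = {(x,t) : q(x) - 2t e₀ ∈ Γ°}`. -/
def SSDP {ι : Type*} [Fintype ι] {m : ℕ} (A0 : Matrix ι ι ℝ) (b0 : ι → ℝ) (c0 : ℝ)
    (A : Fin m → Matrix ι ι ℝ) (b : Fin m → ι → ℝ) (c : Fin m → ℝ) :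
    Set ((ι → ℝ) × ℝ) :=
  {p | qVec A0 b0 c0 A b c p.1 - (2 * p.2) • e0 ∈ polarCone (Gamma A0 A)}

/-- The QCQP epigraph `S = {(x,t) : q₀(x) ≤ 2t, q i (x) ≤ 0 ∀ i}`. -/
def Sepi {ι : Type*} [Fintype ι] {m : ℕ} (A0 : Matrix ι ι ℝ) (b0 : ι → ℝ) (c0 : ℝ)
    (A : Fin m → Matrix ι ι ℝ) (b : Fin m → ι → ℝ) (c : Fin m → ℝ) :
    Set ((ι → ℝ) × ℝ) :=
  {p | quadF A0 b0 c0 p.1 ≤ 2 * p.2 ∧ ∀ i, quadF (A i) (b i) (c i) p.1 ≤ 0}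

/-- `F` is a face of the convex cone `K`. -/
def IsFaceOf {E : Type*} [Add E] (K F : Set E) : Prop :=
  F ⊆ K ∧ ∀ y ∈ K, ∀ z ∈ K, y + z ∈ F → y ∈ F ∧ z ∈ F

/-- `G` is the minimal face of `K` containing `v`. -/
def IsMinFace {E : Type*} [Add E] (K : Set E) (v : E) (G : Set E) : Prop :=
  IsFaceOf K G ∧ v ∈ G ∧ ∀ G', IsFaceOf K G' → v ∈ G' → G ⊆ G'

/-- The set of rounding directions `R(x,t)` at a point `p` of a convex set `C`. -/
def Rset {E : Type*} [AddCommGroup E] [Module ℝ E] (C : Set E) (p : E) : Set E :=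
  {d | ∃ ε : ℝ, 0 < ε ∧ ∀ s ∈ Set.Icc (-ε) ε, p + s • d ∈ C}

/-- The first-order rounding directions `R'(x,t)`, relative to a face `G` of `Γ°`. -/
def Rset' {ι : Type*} [Fintype ι] {m : ℕ} (A0 : Matrix ι ι ℝ) (b0 : ι → ℝ) (c0 : ℝ)
    (A : Fin m → Matrix ι ι ℝ) (b : Fin m → ι → ℝ) (c : Fin m → ℝ)
    (x : ι → ℝ) (t : ℝ) (G : Set (ℝ × (Fin m → ℝ))) : Set ((ι → ℝ) × ℝ) :=
  {d | ∀ α : ℝ,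
    qVec A0 b0 c0 A b c (x + α • d.1) - (2 * (t + α * d.2)) • e0 ∈ Submodule.span ℝ G}

/-- Orthogonal complement (as a set) of a subset of `ℝ^{1+m}` w.r.t. `ipr`. -/
def orthC {m : ℕ} (G : Set (ℝ × (Fin m → ℝ))) : Set (ℝ × (Fin m → ℝ)) :=
  {v | ∀ w ∈ G, ipr v w = 0}

/-!
Write `qLift p = q(x) - 2t e₀`, so that `p ∈ S_SDP` iff `qLift p ∈ Γ°`. Along a line `p + α d`,
`qLift` traces a quadratic curve `v + α w₁ + α² w₂` with `v = qLift p` and `-w₂ ∈ Γ°`; hence the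
`α` keeping it in the closed cone `Γ°` form a closed interval. For `d ∈ R'(p)` the curve lies in
the span of the minimal face of `v`, so it stays in `Γ°` for small `|α|`, and at a finite end of
the interval the minimal face has a span of smaller dimension. By induction on that dimension
both ends lie in `conv S`, hence so does `p`. An infinite end forces `d` to be vertical (this is
where `A[γ*] ≻ 0` enters); then the opposite end lies below `p`, and `conv S` is closed upwards
in `t`.
-/

open Module
open scoped Pointwise
open Submodule (span)

theorem Convex.setOf_add_smul_mem {F : Type*} [AddCommGroup F] [Module ℝ F] {C : Set F}
    (hC : Convex ℝ C) (p d : F) : Convex ℝ {α : ℝ | p + α • d ∈ C} := by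
  have h : {α : ℝ | p + α • d ∈ C} = AffineMap.lineMap p (p + d) ⁻¹' C := by
    ext α
    simp [AffineMap.lineMap_apply, add_comm]
  exact h ▸ hC.affine_preimage _

section MinimalFace

section

variable {E : Type*} [Add E]

def minFace (K : Set E) (v : E) : Set E :=
  ⋂₀ {F | IsFaceOf K F ∧ v ∈ F}

variable {K : Set E} {v : E}

theorem mem_minFace_self : v ∈ minFace K v :=
  mem_sInter.2 fun _ hF => hF.2

theorem minFace_subset (hv : v ∈ K) : minFace K v ⊆ K :=
  sInter_subset_of_mem ⟨⟨subset_rfl, fun _ hy _ hz _ => ⟨hy, hz⟩⟩, hv⟩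

theorem isMinFace_minFace (hv : v ∈ K) : IsMinFace K v (minFace K v) := by
  refine ⟨⟨minFace_subset hv, fun y hy z hz hyz => ?_⟩, mem_minFace_self,
    fun _ hF hvF => sInter_subset_of_mem ⟨hF, hvF⟩⟩
  exact ⟨mem_sInter.2 fun F hF => (hF.1.2 y hy z hz (mem_sInter.1 hyz F hF)).1,
    mem_sInter.2 fun F hF => (hF.1.2 y hy z hz (mem_sInter.1 hyz F hF)).2⟩

theorem mem_minFace_of_add_eq {y z : E} (hy : y ∈ K) (hz : z ∈ K) (h : y + z = v) :
    y ∈ minFace K v :=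
  mem_sInter.2 fun _ hF => (hF.1.2 y hy z hz (h ▸ hF.2)).1

end

variable {E : Type*} [AddCommGroup E] [Module ℝ E] {K : PointedCone ℝ E} {v : E}

-- The points of `K` that can be subtracted a little from `v` form a face containing `v`.
theorem exists_sub_smul_mem_of_mem_minFace (hv : v ∈ K) {y : E} (hy : y ∈ minFace K v) :
    ∃ ε : ℝ, 0 < ε ∧ v - ε • y ∈ K := by
  let G : Set E := {y | y ∈ K ∧ ∃ ε : ℝ, 0 < ε ∧ v - ε • y ∈ K}
  have hG : IsFaceOf (K : Set E) G := by
    refine ⟨fun y hy => hy.1, fun y hy z hz ⟨_, ε, hε, hyz⟩ => ⟨⟨hy, ε, hε, ?_⟩, ⟨hz, ε, hε, ?_⟩⟩⟩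
    · convert K.add_mem hyz (K.smul_mem hε.le hz) using 1
      rw [smul_add]; abel
    · convert K.add_mem hyz (K.smul_mem hε.le hy) using 1
      rw [smul_add]; abel
  have hvG : v ∈ G := ⟨hv, 1, one_pos, by simp⟩
  exact ((isMinFace_minFace hv).2.2 G hG hvG hy).2

theorem span_minFace_le_of_smul_add_eq {u z : E} {l : ℝ} (hu : u ∈ K) (hz : z ∈ K)
    (hl : 0 < l) (h : l • u + z = v) : span ℝ (minFace K u) ≤ span ℝ (minFace K v) := by
  refine Submodule.span_le.2 fun y hy => ?_
  obtain ⟨ε, hε, hsub⟩ := exists_sub_smul_mem_of_mem_minFace hu hy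
  have hyv : (l * ε) • y ∈ minFace K v := by
    refine mem_minFace_of_add_eq (K.smul_mem (by positivity) (minFace_subset hu hy))
      (K.add_mem (K.smul_mem hl.le hsub) hz) ?_
    rw [← h, smul_sub, smul_smul]
    abel
  exact (Submodule.smul_mem_iff _ (by positivity)).1 (Submodule.subset_span hyv)

theorem exists_forall_abs_le_add_smul_mem (hv : v ∈ K) {z : E}
    (hz : z ∈ span ℝ (minFace K v)) :
    ∃ ε : ℝ, 0 < ε ∧ ∀ δ : ℝ, |δ| ≤ ε → v + δ • z ∈ K := by
  induction hz using Submodule.span_induction with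
  | zero => exact ⟨1, one_pos, fun δ _ => by simpa using hv⟩
  | mem y hy =>
    obtain ⟨ε, hε, hsub⟩ := exists_sub_smul_mem_of_mem_minFace hv hy
    have hneg : -ε ∈ {δ : ℝ | v + δ • y ∈ K} := by simpa [neg_smul, ← sub_eq_add_neg] using hsub
    have hpos : ε ∈ {δ : ℝ | v + δ • y ∈ K} :=
      K.add_mem hv (K.smul_mem hε.le (minFace_subset hv hy))
    exact ⟨ε, hε, fun δ hδ =>
      (K.convex.setOf_add_smul_mem v y).ordConnected.out hneg hpos (abs_le.1 hδ)⟩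
  | add x y _ _ hx hy =>
    obtain ⟨ε₁, hε₁, h₁⟩ := hx
    obtain ⟨ε₂, hε₂, h₂⟩ := hy
    refine ⟨min ε₁ ε₂ / 2, by positivity, fun δ hδ => ?_⟩
    have hδ' : |2 * δ| ≤ min ε₁ ε₂ := by rw [abs_mul, abs_two]; linarith
    have hmid : v + δ • (x + y) =
        (1 / 2 : ℝ) • (v + (2 * δ) • x) + (1 / 2 : ℝ) • (v + (2 * δ) • y) := by
      match_scalars <;> ring
    rw [hmid]
    exact K.convex (h₁ _ (hδ'.trans (min_le_left _ _))) (h₂ _ (hδ'.trans (min_le_right _ _)))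
      (by norm_num) (by norm_num) (by norm_num)
  | smul a x _ hx =>
    obtain ⟨ε, hε, h⟩ := hx
    refine ⟨ε / (|a| + 1), by positivity, fun δ hδ => ?_⟩
    rw [smul_smul]
    refine h _ ?_
    rw [abs_mul]
    calc |δ| * |a| ≤ ε / (|a| + 1) * (|a| + 1) := by gcongr; linarith
      _ = ε := by field_simp

end MinimalFace

section QuadraticCurve

variable {E : Type*} [AddCommGroup E] [Module ℝ E]

def quadCurve (v w₁ w₂ : E) (α : ℝ) : E :=
  v + α • w₁ + α ^ 2 • w₂

variable {v w₁ w₂ : E}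

@[simp]
theorem quadCurve_zero : quadCurve v w₁ w₂ 0 = v := by
  simp [quadCurve]

theorem quadCurve_add (a β : ℝ) :
    quadCurve v w₁ w₂ (a + β) = quadCurve (quadCurve v w₁ w₂ a) (w₁ + (2 * a) • w₂) w₂ β := by
  simp only [quadCurve]
  match_scalars <;> ring

theorem quadCurve_convexComb {θ η : ℝ} (h : θ + η = 1) (α β : ℝ) :
    quadCurve v w₁ w₂ (θ * α + η * β) =
      θ • quadCurve v w₁ w₂ α + η • quadCurve v w₁ w₂ β + (θ * η * (α - β) ^ 2) • (-w₂) := by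
  obtain rfl : η = 1 - θ := by linarith
  simp only [quadCurve]
  match_scalars <;> ring

theorem quadCurve_coeffs_mem {S : Submodule ℝ E} (h : ∀ α, quadCurve v w₁ w₂ α ∈ S) :
    w₁ ∈ S ∧ w₂ ∈ S := by
  have h₁ : w₁ = (1 / 2 : ℝ) • (quadCurve v w₁ w₂ 1 - quadCurve v w₁ w₂ (-1)) := by
    simp only [quadCurve]; match_scalars <;> ring
  have h₂ : w₂ = (1 / 2 : ℝ) • (quadCurve v w₁ w₂ 1 + quadCurve v w₁ w₂ (-1))
      - quadCurve v w₁ w₂ 0 := by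
    simp only [quadCurve]; match_scalars <;> ring
  constructor
  · rw [h₁]; exact S.smul_mem _ (S.sub_mem (h 1) (h (-1)))
  · rw [h₂]; exact S.sub_mem (S.smul_mem _ (S.add_mem (h 1) (h (-1)))) (h 0)

variable {K : PointedCone ℝ E}

theorem convex_quadCurve_preimage (hw₂ : -w₂ ∈ K) : Convex ℝ (quadCurve v w₁ w₂ ⁻¹' K) := by
  intro α hα β hβ θ η hθ hη hθη
  simp only [mem_preimage, smul_eq_mul, quadCurve_convexComb hθη]
  exact K.add_mem (K.convex hα hβ hθ hη hθη) (K.smul_mem (by positivity) hw₂)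

theorem exists_forall_abs_le_quadCurve_mem (hv : v ∈ K)
    (h₁ : w₁ ∈ span ℝ (minFace K v)) (h₂ : w₂ ∈ span ℝ (minFace K v)) :
    ∃ ε : ℝ, 0 < ε ∧ ∀ α : ℝ, |α| ≤ ε → quadCurve v w₁ w₂ α ∈ K := by
  obtain ⟨ε₁, hε₁, hh₁⟩ := exists_forall_abs_le_add_smul_mem hv h₁
  obtain ⟨ε₂, hε₂, hh₂⟩ := exists_forall_abs_le_add_smul_mem hv h₂
  refine ⟨min (ε₁ / 2) (min 1 (ε₂ / 2)), by positivity, fun α hα => ?_⟩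
  have hα₁ : |α| ≤ ε₁ / 2 := hα.trans (min_le_left _ _)
  have hα₂ : |α| ≤ 1 := hα.trans ((min_le_right _ _).trans (min_le_left _ _))
  have hα₃ : |α| ≤ ε₂ / 2 := hα.trans ((min_le_right _ _).trans (min_le_right _ _))
  have hsq : |2 * α ^ 2| ≤ ε₂ := by
    rw [abs_mul, abs_two, abs_pow, sq]
    nlinarith [abs_nonneg α]
  have hmid : quadCurve v w₁ w₂ α =
      (1 / 2 : ℝ) • (v + (2 * α) • w₁) + (1 / 2 : ℝ) • (v + (2 * α ^ 2) • w₂) := by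
    simp only [quadCurve]
    match_scalars <;> ring
  rw [hmid]
  exact K.convex (hh₁ _ (by rw [abs_mul, abs_two]; linarith)) (hh₂ _ hsq)
    (by norm_num) (by norm_num) (by norm_num)

theorem span_minFace_quadCurve_lt (hv : v ∈ K) (h₁ : w₁ ∈ span ℝ (minFace K v))
    (h₂ : w₂ ∈ span ℝ (minFace K v)) (hw₂ : -w₂ ∈ K) {a : ℝ} (ha : 0 < a)
    (hca : quadCurve v w₁ w₂ a ∈ K) (hbeyond : ∀ β, a < β → quadCurve v w₁ w₂ β ∉ K) :
    span ℝ (minFace K (quadCurve v w₁ w₂ a)) < span ℝ (minFace K v) := by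
  obtain ⟨ε, hε, hsmall⟩ := exists_forall_abs_le_quadCurve_mem hv h₁ h₂
  have hcε : quadCurve v w₁ w₂ (-ε) ∈ K := hsmall _ (by rw [abs_neg, abs_of_pos hε])
  -- `v` is a positive combination of the curve points at `a`, `-ε` and of `-w₂`,
  -- since `0` lies between `-ε` and `a`
  have hθ : ε / (a + ε) + a / (a + ε) = 1 := by field_simp; ring
  have hv_eq := quadCurve_convexComb (v := v) (w₁ := w₁) (w₂ := w₂) hθ a (-ε)
  rw [show ε / (a + ε) * a + a / (a + ε) * -ε = 0 by field_simp; ring, quadCurve_zero,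
    add_assoc] at hv_eq
  have hle := span_minFace_le_of_smul_add_eq hca
    (K.add_mem (K.smul_mem (by positivity) hcε) (K.smul_mem (by positivity) hw₂))
    (by positivity) hv_eq.symm
  -- with equal spans, the curve would stay in `K` a little beyond `a`
  refine lt_of_le_of_ne hle fun heq => ?_
  rw [← heq] at h₁ h₂
  obtain ⟨ε', hε', hnext⟩ := exists_forall_abs_le_quadCurve_mem hca
    (Submodule.add_mem _ h₁ (Submodule.smul_mem _ (2 * a) h₂)) h₂
  exact hbeyond (a + ε') (by linarith)
    (by rw [quadCurve_add]; exact hnext ε' (abs_of_pos hε').le)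

theorem exists_quadCurve_mem_span_minFace_lt [TopologicalSpace E] [IsTopologicalAddGroup E]
    [ContinuousSMul ℝ E] (hK : IsClosed (K : Set E)) (hv : v ∈ K)
    (h₁ : w₁ ∈ span ℝ (minFace K v)) (h₂ : w₂ ∈ span ℝ (minFace K v)) (hw₂ : -w₂ ∈ K)
    (hbdd : BddAbove (quadCurve v w₁ w₂ ⁻¹' K)) :
    ∃ a : ℝ, 0 < a ∧ quadCurve v w₁ w₂ a ∈ K ∧
      span ℝ (minFace K (quadCurve v w₁ w₂ a)) < span ℝ (minFace K v) := by
  obtain ⟨ε, hε, hsmall⟩ := exists_forall_abs_le_quadCurve_mem hv h₁ h₂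
  have hεI : ε ∈ quadCurve v w₁ w₂ ⁻¹' K := hsmall ε (abs_of_pos hε).le
  have hclosed : IsClosed (quadCurve v w₁ w₂ ⁻¹' K) :=
    hK.preimage (by unfold quadCurve; fun_prop)
  have ha : 0 < sSup (quadCurve v w₁ w₂ ⁻¹' K) := hε.trans_le (le_csSup hbdd hεI)
  have haI := hclosed.csSup_mem ⟨ε, hεI⟩ hbdd
  exact ⟨_, ha, haI, span_minFace_quadCurve_lt hv h₁ h₂ hw₂ ha haI
    fun β hβ hβI => not_lt.2 (le_csSup hbdd hβI) hβ⟩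

theorem quadCurve_mem_of_not_bddAbove (hv : v ∈ K) (hw₂ : -w₂ ∈ K)
    (hub : ¬BddAbove (quadCurve v w₁ w₂ ⁻¹' K)) {α : ℝ} (hα : 0 ≤ α) :
    quadCurve v w₁ w₂ α ∈ K := by
  obtain ⟨β, hβ, hαβ⟩ := not_bddAbove_iff.1 hub α
  exact (convex_quadCurve_preimage hw₂).ordConnected.out (by simpa using hv) hβ ⟨hα, hαβ.le⟩

end QuadraticCurve

theorem eq_zero_and_nonpos_of_quadratic_nonpos {C B Q : ℝ} (hQ : 0 ≤ Q)
    (h : ∀ α : ℝ, 0 ≤ α → C + α * B + α ^ 2 * Q ≤ 0) : Q = 0 ∧ B ≤ 0 := by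
  have hQ0 : Q = 0 := by
    by_contra hne
    have hQpos : 0 < Q := lt_of_le_of_ne hQ (Ne.symm hne)
    have hα : Q * ((|B| + |C| + 1) / Q + 1) = |B| + |C| + 1 + Q := by field_simp
    nlinarith [h ((|B| + |C| + 1) / Q + 1) (by positivity), neg_abs_le B, neg_abs_le C,
      abs_nonneg B, abs_nonneg C, mul_nonneg (abs_nonneg B) (div_nonneg (abs_nonneg B) hQ)]
  refine ⟨hQ0, not_lt.1 fun hB => ?_⟩
  have hα : B * ((|C| + 1) / B) = |C| + 1 := by field_simp
  nlinarith [h ((|C| + 1) / B) (by positivity), neg_abs_le C]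

section PolarCone

variable {m : ℕ}

theorem ipr_add_left (u v w : ℝ × (Fin m → ℝ)) : ipr (u + v) w = ipr u w + ipr v w := by
  simp only [ipr, Prod.fst_add, Prod.snd_add, add_dotProduct]; ring

theorem ipr_smul_left (r : ℝ) (u w : ℝ × (Fin m → ℝ)) : ipr (r • u) w = r * ipr u w := by
  simp only [ipr, Prod.smul_fst, Prod.smul_snd, smul_dotProduct, smul_eq_mul]; ring

theorem ipr_neg_left (u w : ℝ × (Fin m → ℝ)) : ipr (-u) w = -ipr u w := by
  simpa using ipr_smul_left (-1) u w

def polarPointedCone (S : Set (ℝ × (Fin m → ℝ))) : PointedCone ℝ (ℝ × (Fin m → ℝ)) where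
  carrier := polarCone S
  zero_mem' w _ := by simp [ipr]
  add_mem' hu hv w hw := by rw [ipr_add_left]; exact add_nonpos (hu w hw) (hv w hw)
  smul_mem' c u hu w hw := by
    show ipr ((c : ℝ) • u) w ≤ 0
    rw [ipr_smul_left]
    exact mul_nonpos_of_nonneg_of_nonpos c.2 (hu w hw)

theorem isClosed_polarCone (S : Set (ℝ × (Fin m → ℝ))) : IsClosed (polarCone S) := by
  have h : polarCone S = ⋂ w ∈ S, {v | ipr v w ≤ 0} := by ext; simp [polarCone]
  rw [h]
  exact isClosed_biInter fun w _ => isClosed_le (by unfold ipr dotProduct; fun_prop)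
    continuous_const

end PolarCone

section QCQP

variable {ι : Type*} [Fintype ι] {m : ℕ} (A0 : Matrix ι ι ℝ) (b0 : ι → ℝ) (c0 : ℝ)
  (A : Fin m → Matrix ι ι ℝ) (b : Fin m → ι → ℝ) (c : Fin m → ℝ)

def qLift (p : (ι → ℝ) × ℝ) : ℝ × (Fin m → ℝ) :=
  qVec A0 b0 c0 A b c p.1 - (2 * p.2) • e0

def quadPart (y : ι → ℝ) : ℝ × (Fin m → ℝ) :=
  (y ⬝ᵥ A0 *ᵥ y, fun i => y ⬝ᵥ A i *ᵥ y)

def linPart (p d : (ι → ℝ) × ℝ) : ℝ × (Fin m → ℝ) :=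
  (p.1 ⬝ᵥ A0 *ᵥ d.1 + d.1 ⬝ᵥ A0 *ᵥ p.1 + 2 * (b0 ⬝ᵥ d.1) - 2 * d.2,
    fun i => p.1 ⬝ᵥ A i *ᵥ d.1 + d.1 ⬝ᵥ A i *ᵥ p.1 + 2 * (b i ⬝ᵥ d.1))

theorem quadF_add_smul (M : Matrix ι ι ℝ) (b' : ι → ℝ) (c' : ℝ) (x y : ι → ℝ) (α : ℝ) :
    quadF M b' c' (x + α • y) =
      quadF M b' c' x + α * (x ⬝ᵥ M *ᵥ y + y ⬝ᵥ M *ᵥ x + 2 * (b' ⬝ᵥ y))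
        + α ^ 2 * (y ⬝ᵥ M *ᵥ y) := by
  simp only [quadF, mulVec_add, mulVec_smul, dotProduct_add, add_dotProduct, dotProduct_smul,
    smul_dotProduct, smul_eq_mul]
  ring

theorem qLift_add_smul (p d : (ι → ℝ) × ℝ) (α : ℝ) :
    qLift A0 b0 c0 A b c (p + α • d) =
      quadCurve (qLift A0 b0 c0 A b c p) (linPart A0 b0 A b p d) (quadPart A0 A d.1) α := by
  ext i
  · simp only [qLift, qVec, e0, quadCurve, linPart, quadPart, Prod.fst_add, Prod.snd_add,
      Prod.smul_fst, Prod.smul_snd, Prod.fst_sub, smul_eq_mul, quadF_add_smul]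
    ring
  · simp only [qLift, qVec, e0, quadCurve, linPart, quadPart, Prod.fst_add, Prod.snd_add,
      Prod.smul_fst, Prod.smul_snd, Prod.snd_sub, Pi.sub_apply, Pi.add_apply, Pi.smul_apply,
      Pi.zero_apply, smul_eq_mul, quadF_add_smul]
    ring

theorem ipr_qLift (p : (ι → ℝ) × ℝ) (γ : ℝ × (Fin m → ℝ)) :
    ipr (qLift A0 b0 c0 A b c p) γ =
      γ.1 * (quadF A0 b0 c0 p.1 - 2 * p.2) + ∑ i, γ.2 i * quadF (A i) (b i) (c i) p.1 := by
  simp [ipr, qLift, qVec, e0, dotProduct, mul_comm]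

theorem ipr_quadPart (y : ι → ℝ) (γ : ℝ × (Fin m → ℝ)) :
    ipr (quadPart A0 A y) γ = y ⬝ᵥ Amix A0 A γ.1 γ.2 *ᵥ y := by
  simp only [ipr, quadPart, Amix, add_mulVec, smul_mulVec, Matrix.sum_mulVec, dotProduct_add,
    dotProduct_smul, dotProduct_sum, smul_eq_mul, dotProduct_comm _ γ.2]
  rw [mul_comm]
  rfl

theorem neg_quadPart_mem_polarCone (y : ι → ℝ) : -quadPart A0 A y ∈ polarCone (Gamma A0 A) :=
  fun γ hγ => by
    rw [ipr_neg_left, ipr_quadPart, neg_nonpos]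
    exact hγ.2.2.dotProduct_mulVec_nonneg y

theorem setOf_add_smul_mem_SSDP (p d : (ι → ℝ) × ℝ) :
    {α : ℝ | p + α • d ∈ SSDP A0 b0 c0 A b c} =
      quadCurve (qLift A0 b0 c0 A b c p) (linPart A0 b0 A b p d) (quadPart A0 A d.1) ⁻¹'
        polarPointedCone (Gamma A0 A) := by
  ext α
  exact iff_of_eq (congrArg (· ∈ polarCone (Gamma A0 A)) (qLift_add_smul A0 b0 c0 A b c p d α))

theorem Sepi_subset_SSDP : Sepi A0 b0 c0 A b c ⊆ SSDP A0 b0 c0 A b c := by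
  intro p ⟨h0, hi⟩ γ hγ
  rw [← qLift, ipr_qLift]
  exact add_nonpos (mul_nonpos_of_nonneg_of_nonpos hγ.1 (by linarith))
    (Finset.sum_nonpos fun i _ => mul_nonpos_of_nonneg_of_nonpos (hγ.2.1 i) (hi i))

theorem convex_SSDP : Convex ℝ (SSDP A0 b0 c0 A b c) := by
  intro p hp q hq θ η hθ hη hθη
  have hline := setOf_add_smul_mem_SSDP A0 b0 c0 A b c q (p - q) ▸
    convex_quadCurve_preimage (neg_quadPart_mem_polarCone A0 A _)
  have h₀ : (0 : ℝ) ∈ {α : ℝ | q + α • (p - q) ∈ SSDP A0 b0 c0 A b c} := by simpa using hq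
  have h₁ : (1 : ℝ) ∈ {α : ℝ | q + α • (p - q) ∈ SSDP A0 b0 c0 A b c} := by simpa using hp
  have hcomb : θ • p + η • q = q + (θ • (1 : ℝ) + η • (0 : ℝ)) • (p - q) := by
    obtain rfl : η = 1 - θ := by linarith
    simp only [smul_eq_mul]
    match_scalars <;> ring
  rw [hcomb]
  exact hline h₁ h₀ hθ hη hθη

theorem add_vertical_mem_convexHull_Sepi {p : (ι → ℝ) × ℝ}
    (hp : p ∈ convexHull ℝ (Sepi A0 b0 c0 A b c)) {s : ℝ} (hs : 0 ≤ s) :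
    p + (0, s) ∈ convexHull ℝ (Sepi A0 b0 c0 A b c) := by
  have hshift : ((0 : ι → ℝ), s) +ᵥ Sepi A0 b0 c0 A b c ⊆ Sepi A0 b0 c0 A b c := by
    rintro _ ⟨q, ⟨hq0, hqi⟩, rfl⟩
    exact ⟨by simp only [vadd_eq_add, Prod.fst_add, Prod.snd_add, zero_add]; linarith,
      by simpa using hqi⟩
  have hmem := vadd_mem_vadd_set (a := ((0 : ι → ℝ), s)) hp
  rw [← convexHull_vadd] at hmem
  rw [add_comm]
  exact convexHull_mono hshift hmem

theorem vertical_of_not_bddAbove (hdef : ∃ g ∈ Gamma1 A0 A, (Amix A0 A 1 g).PosDef)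
    {p d : (ι → ℝ) × ℝ} (hp : p ∈ SSDP A0 b0 c0 A b c)
    (hub : ¬BddAbove {α : ℝ | p + α • d ∈ SSDP A0 b0 c0 A b c}) : d.1 = 0 ∧ 0 ≤ d.2 := by
  obtain ⟨g, hg, hpd⟩ := hdef
  have hγ : ((1 : ℝ), g) ∈ Gamma A0 A := ⟨zero_le_one, hg⟩
  rw [setOf_add_smul_mem_SSDP] at hub
  have hray α (hα : 0 ≤ α) := quadCurve_mem_of_not_bddAbove hp
    (neg_quadPart_mem_polarCone A0 A d.1) hub hα ((1 : ℝ), g) hγ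
  simp only [quadCurve, ipr_add_left, ipr_smul_left, ipr_quadPart] at hray
  have hQ₀ : 0 ≤ d.1 ⬝ᵥ Amix A0 A 1 g *ᵥ d.1 := by
    simpa using hpd.posSemidef.dotProduct_mulVec_nonneg d.1
  obtain ⟨hQ, hB⟩ := eq_zero_and_nonpos_of_quadratic_nonpos hQ₀ hray
  have hd₁ : d.1 = 0 := by
    by_contra hne
    exact (hpd.dotProduct_mulVec_pos hne).ne' (by simpa using hQ)
  have hB' : ipr (linPart A0 b0 A b p d) ((1 : ℝ), g) = -2 * d.2 := by simp [ipr, linPart, hd₁]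
  exact ⟨hd₁, by linarith⟩

theorem neg_mem_Rset' {x : ι → ℝ} {t : ℝ} {G : Set (ℝ × (Fin m → ℝ))} {d : (ι → ℝ) × ℝ}
    (hd : d ∈ Rset' A0 b0 c0 A b c x t G) : -d ∈ Rset' A0 b0 c0 A b c x t G := fun α => by
  simpa [neg_smul, smul_neg, mul_neg, neg_mul] using hd (-α)

theorem exists_add_smul_mem_SSDP_finrank_lt {p d : (ι → ℝ) × ℝ}
    (hp : p ∈ SSDP A0 b0 c0 A b c)
    (hd : d ∈ Rset' A0 b0 c0 A b c p.1 p.2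
      (minFace (polarCone (Gamma A0 A)) (qLift A0 b0 c0 A b c p)))
    (hbdd : BddAbove {α : ℝ | p + α • d ∈ SSDP A0 b0 c0 A b c}) :
    ∃ a : ℝ, 0 < a ∧ p + a • d ∈ SSDP A0 b0 c0 A b c ∧
      finrank ℝ (span ℝ (minFace (polarCone (Gamma A0 A)) (qLift A0 b0 c0 A b c (p + a • d))))
        < finrank ℝ (span ℝ (minFace (polarCone (Gamma A0 A)) (qLift A0 b0 c0 A b c p))) := by
  have hcurve (α : ℝ) : quadCurve (qLift A0 b0 c0 A b c p) (linPart A0 b0 A b p d)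
      (quadPart A0 A d.1) α ∈
        span ℝ (minFace (polarPointedCone (Gamma A0 A)) (qLift A0 b0 c0 A b c p)) :=
    qLift_add_smul A0 b0 c0 A b c p d α ▸ hd α
  obtain ⟨h₁, h₂⟩ := quadCurve_coeffs_mem hcurve
  rw [setOf_add_smul_mem_SSDP] at hbdd
  obtain ⟨a, ha, hmem, hlt⟩ := exists_quadCurve_mem_span_minFace_lt (isClosed_polarCone _) hp
    h₁ h₂ (neg_quadPart_mem_polarCone A0 A d.1) hbdd
  rw [← qLift_add_smul] at hmem hlt
  exact ⟨a, ha, hmem, Submodule.finrank_lt_finrank_of_lt hlt⟩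

theorem SSDP_subset_convexHull_Sepi (hdef : ∃ g ∈ Gamma1 A0 A, (Amix A0 A 1 g).PosDef)
    (h : ∀ p ∈ SSDP A0 b0 c0 A b c \ Sepi A0 b0 c0 A b c,
      ∀ G : Set (ℝ × (Fin m → ℝ)),
        IsMinFace (polarCone (Gamma A0 A)) (qVec A0 b0 c0 A b c p.1 - (2 * p.2) • e0) G →
        ∃ d ∈ Rset' A0 b0 c0 A b c p.1 p.2 G, d ≠ 0) :
    SSDP A0 b0 c0 A b c ⊆ convexHull ℝ (Sepi A0 b0 c0 A b c) := by
  intro p hp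
  induction hk : finrank ℝ (span ℝ (minFace (polarCone (Gamma A0 A)) (qLift A0 b0 c0 A b c p)))
    using Nat.strong_induction_on generalizing p with
  | _ k IH =>
  by_cases hS : p ∈ Sepi A0 b0 c0 A b c
  · exact subset_convexHull ℝ _ hS
  obtain ⟨d, hd, hd0⟩ := h p ⟨hp, hS⟩ _ (isMinFace_minFace (K := polarCone (Gamma A0 A)) hp)
  have endpoint (e : (ι → ℝ) × ℝ) (he : e ∈ Rset' A0 b0 c0 A b c p.1 p.2
      (minFace (polarCone (Gamma A0 A)) (qLift A0 b0 c0 A b c p)))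
      (hbdd : BddAbove {α : ℝ | p + α • e ∈ SSDP A0 b0 c0 A b c}) :
      ∃ a : ℝ, 0 < a ∧ p + a • e ∈ convexHull ℝ (Sepi A0 b0 c0 A b c) := by
    obtain ⟨a, ha, hmem, hlt⟩ := exists_add_smul_mem_SSDP_finrank_lt A0 b0 c0 A b c hp he hbdd
    exact ⟨a, ha, IH _ (hk ▸ hlt) hmem rfl⟩
  wlog hbdd : BddAbove {α : ℝ | p + α • d ∈ SSDP A0 b0 c0 A b c} generalizing d with H
  · -- `d` points vertically upwards, so `-d` is bounded and can take its place
    obtain ⟨hd₁, hd₂⟩ := vertical_of_not_bddAbove A0 b0 c0 A b c hdef hp hbdd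
    refine H (-d) (neg_mem_Rset' A0 b0 c0 A b c hd) (neg_ne_zero.2 hd0) (by_contra fun hub => ?_)
    obtain ⟨-, hd₂'⟩ := vertical_of_not_bddAbove A0 b0 c0 A b c hdef hp hub
    exact hd0 (Prod.ext hd₁ (le_antisymm (by simpa using hd₂') hd₂))
  obtain ⟨a, ha, hpa⟩ := endpoint d hd hbdd
  by_cases hbdd' : BddAbove {α : ℝ | p + α • -d ∈ SSDP A0 b0 c0 A b c}
  · obtain ⟨b', hb', hpb⟩ := endpoint (-d) (neg_mem_Rset' A0 b0 c0 A b c hd) hbdd'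
    -- `0` lies between `-b'` and `a` on the line through `p` in direction `d`
    have hline := ((convex_convexHull ℝ _).setOf_add_smul_mem p d).ordConnected.out
      (show -b' ∈ {α : ℝ | p + α • d ∈ convexHull ℝ (Sepi A0 b0 c0 A b c)} by simpa using hpb)
      hpa ⟨by linarith, ha.le⟩
    simpa using hline
  · -- `-d` points vertically upwards, so `p` lies above `p + a • d`
    obtain ⟨hd₁, hd₂⟩ := vertical_of_not_bddAbove A0 b0 c0 A b c hdef hp hbdd'
    simp only [Prod.fst_neg, neg_eq_zero, Prod.snd_neg, Left.nonneg_neg_iff] at hd₁ hd₂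
    convert add_vertical_mem_convexHull_Sepi A0 b0 c0 A b c hpa
      (mul_nonneg ha.le (neg_nonneg.2 hd₂)) using 1
    ext <;> simp [hd₁]

end QCQP

theorem stmt9_general {n m : ℕ} (A0 : Matrix (Fin n) (Fin n) ℝ) (b0 : Fin n → ℝ) (c0 : ℝ)
    (A : Fin m → Matrix (Fin n) (Fin n) ℝ) (b : Fin m → Fin n → ℝ) (c : Fin m → ℝ)
    (hdef : ∃ g ∈ Gamma1 A0 A, (Amix A0 A 1 g).PosDef)
    (h : ∀ p ∈ SSDP A0 b0 c0 A b c \ Sepi A0 b0 c0 A b c,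
      ∀ G : Set (ℝ × (Fin m → ℝ)),
        IsMinFace (polarCone (Gamma A0 A))
          (qVec A0 b0 c0 A b c p.1 - (2 * p.2) • e0) G →
        ∃ d ∈ Rset' A0 b0 c0 A b c p.1 p.2 G, d ≠ 0) :
    convexHull ℝ (Sepi A0 b0 c0 A b c) = SSDP A0 b0 c0 A b c :=
  (convexHull_min (Sepi_subset_SSDP A0 b0 c0 A b c) (convex_SSDP A0 b0 c0 A b c)).antisymm
    (SSDP_subset_convexHull_Sepi A0 b0 c0 A b c hdef h)

/-- sufficiency — if `R'(x,t)` is nontrivial at every point of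
`S_SDP \ S`, then `conv(S) = S_SDP`. -/
theorem stmt9 {n m : ℕ} (A0 : Matrix (Fin n) (Fin n) ℝ) (b0 : Fin n → ℝ) (c0 : ℝ)
    (A : Fin m → Matrix (Fin n) (Fin n) ℝ) (b : Fin m → Fin n → ℝ) (c : Fin m → ℝ)
    (hA0 : A0.IsSymm) (hA : ∀ i, (A i).IsSymm)
    (hdef : ∃ g ∈ Gamma1 A0 A, (Amix A0 A 1 g).PosDef)
    (h : ∀ p ∈ SSDP A0 b0 c0 A b c \ Sepi A0 b0 c0 A b c,
      ∀ G : Set (ℝ × (Fin m → ℝ)),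
        IsMinFace (polarCone (Gamma A0 A))
          (qVec A0 b0 c0 A b c p.1 - (2 * p.2) • e0) G →
        ∃ d ∈ Rset' A0 b0 c0 A b c p.1 p.2 G, d ≠ 0) :
    convexHull ℝ (Sepi A0 b0 c0 A b c) = SSDP A0 b0 c0 A b c :=
  stmt9_general A0 b0 c0 A b c hdef h
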